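/- arXiv:2108.12978 — 3 statements merged into one kernel-verified Lean document; each statement's English description precedes it below -/
import Mathlib

section
/- Billboard Lemma: Let m be a positive integer, let 𝒟 i (for i : Fin m) and 𝒲 be measurable spaces, and let 𝒲' i (for i : Fin m) be measurable spaces. Suppose M : (Π i, 𝒟 i) → Measure 𝒲 assigns to each dataset a probability measure and is (ε,δ)-differentially private with respect to neighboring datasets. For each i : Fin m let f i : 𝒟 i → 𝒲 → 𝒲' i be a family of functions such that f i x is measurable for every x ∈ 𝒟 i. Then the joint mechanism sending a dataset D to the pushforward of M(D) under w ↦ (fun i => f i (D i) w) is (ε,δ)-jointly differentially private: for every index j : Fin m, every pair of datasets D, D' that agree on all coordinates except possibly j, and every measurable subset S of Π (i : {i : Fin m // i ≠ j}), 𝒲' i, one has Measure.map (fun w => fun i : {i // i ≠ j} => f i (D i) w) (M D) S ≤ Real.exp ε · Measure.map (fun w => fun i : {i // i ≠ j} => f i (D' i) w) (M D') S + δ. -/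
open MeasureTheory

/-- Billboard Lemma: composing an `(ε,δ)`-differentially private mechanism with
arbitrary local (per-task) post-processing of the private output yields an
`(ε,δ)`-jointly differentially private mechanism. -/
theorem billboard_lemma
    {m : ℕ} (hm : 0 < m)
    {𝒟 : Fin m → Type*} [∀ i, MeasurableSpace (𝒟 i)]
    {𝒲 : Type*} [MeasurableSpace 𝒲]
    {𝒲' : Fin m → Type*} [∀ i, MeasurableSpace (𝒲' i)]
    (ε δ : ℝ)
    (M : (∀ i : Fin m, 𝒟 i) → Measure 𝒲)
    (hMprob : ∀ D, IsProbabilityMeasure (M D))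
    (hMdp : ∀ (j : Fin m) (D D' : ∀ i : Fin m, 𝒟 i),
      (∀ k : Fin m, k ≠ j → D k = D' k) →
      ∀ S : Set 𝒲, MeasurableSet S →
        M D S ≤ ENNReal.ofReal (Real.exp ε) * M D' S + ENNReal.ofReal δ)
    (f : ∀ i : Fin m, 𝒟 i → 𝒲 → 𝒲' i)
    (hf : ∀ (i : Fin m) (x : 𝒟 i), Measurable (f i x)) :
    ∀ (j : Fin m) (D D' : ∀ i : Fin m, 𝒟 i),
      (∀ k : Fin m, k ≠ j → D k = D' k) →
      ∀ S : Set (∀ i : {i : Fin m // i ≠ j}, 𝒲' i), MeasurableSet S →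
        Measure.map (fun w => fun i : {i : Fin m // i ≠ j} => f i (D i) w) (M D) S
          ≤ ENNReal.ofReal (Real.exp ε)
              * Measure.map (fun w => fun i : {i : Fin m // i ≠ j} => f i (D' i) w) (M D') S
            + ENNReal.ofReal δ := by
  intro j D D' h S hS
  have hfun : (fun w => fun i : {i : Fin m // i ≠ j} => f i (D i) w)
      = (fun w => fun i : {i : Fin m // i ≠ j} => f i (D' i) w) := by
    funext w i
    rw [h i i.2]
  have hmeas : Measurable (fun w => fun i : {i : Fin m // i ≠ j} => f i (D' i) w) :=
    measurable_pi_lambda _ fun i => hf i (D' i)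
  rw [hfun, Measure.map_apply hmeas hS, Measure.map_apply hmeas hS]
  exact hMdp j D D' h _ (hmeas hS)
end

section
/- Theorem 2 (full participation, q = m): Let d, m, T be positive integers, γ > 0, δ ∈ (0,1), and 0 < ε ≤ 2·Real.log(1/δ). Set σ = 4·γ·Real.sqrt(T·Real.log(1/δ)) / (ε·m). Suppose for each round t < T and each task k ∈ Fin m the update map h_k^t : 𝒟 k × (Fin d → ℝ) → (Fin d → ℝ) is jointly measurable and has ℓ₂-sensitivity at most γ in its data argument (for all w and all x, x' ∈ 𝒟 k, ‖h_k^t(x, w) − h_k^t(x', w)‖₂ ≤ γ). For each k let h'_k : 𝒟 k × (Fin d → ℝ) → 𝒲' k be a local finetuning map, measurable in its second argument for each fixed data value. Then the multi-task mechanism that outputs, for each task k, the personalized model h'_k(D k, w) with w drawn from μ_T(D) — i.e., the mechanism D ↦ Measure.map (fun w => fun k => h'_k(D k, w)) (μ_T(D)) — is (ε,δ)-jointly differentially private: for every j ∈ Fin m, every pair of datasets D, D' that agree on all coordinates except possibly j, and every measurable subset S of Π (k : {k : Fin m // k ≠ j}), 𝒲' k, one has Measure.map (fun w => fun k : {k //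 k ≠ j} => h'_k(D k, w)) (μ_T(D)) S ≤ Real.exp(ε) · Measure.map (fun w => fun k : {k // k ≠ j} => h'_k(D' k, w)) (μ_T(D')) S + δ. -/
open MeasureTheory ProbabilityTheory
open scoped ENNReal NNReal Real

/-- The Euclidean (`ℓ₂`) norm of a vector in `Fin d → ℝ`. -/
noncomputable def euclNorm {d : ℕ} (x : Fin d → ℝ) : ℝ :=
  Real.sqrt (∑ i, (x i) ^ 2)

/-- Isotropic Gaussian noise in dimension `d` with noise level `σ`:
the product of `d` copies of the real Gaussian measure with mean `0` and variance `σ²`. -/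
noncomputable def gaussNoise (d : ℕ) (σ : ℝ) : Measure (Fin d → ℝ) :=
  Measure.pi fun _ : Fin d => gaussianReal 0 (Real.toNNReal (σ ^ 2))

namespace Theorem2Aux

lemma lintegral_pi_const {X : Type*} [MeasurableSpace X] (μ : Measure X) [SigmaFinite μ] :
    ∀ (n : ℕ) (f : Fin n → X → ℝ≥0∞), (∀ i, Measurable (f i)) →
      ∫⁻ x, ∏ i, f i (x i) ∂(Measure.pi fun _ : Fin n => μ) = ∏ i, ∫⁻ y, f i y ∂μ := by
  intro n
  induction n with
  | zero =>
    intro f _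
    simp [lintegral_const, Measure.pi_univ]
  | succ n ih =>
    intro f hf
    have hmp := measurePreserving_piFinSuccAbove (fun _ : Fin (n + 1) => μ) 0
    have hgm : Measurable fun y : X × (Fin n → X) => f 0 y.1 * ∏ j, f j.succ (y.2 j) :=
      ((hf 0).comp measurable_fst).mul
        (Finset.measurable_prod _ fun j _ =>
          (hf j.succ).comp ((measurable_pi_apply j).comp measurable_snd))
    calc ∫⁻ x, ∏ i, f i (x i) ∂(Measure.pi fun _ : Fin (n + 1) => μ)
        = ∫⁻ y, f 0 y.1 * ∏ j, f j.succ (y.2 j)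
            ∂(μ.prod (Measure.pi fun _ : Fin n => μ)) := by
          rw [← hmp.lintegral_comp hgm]
          refine lintegral_congr fun x => ?_
          simp [MeasurableEquiv.piFinSuccAbove, Fin.prod_univ_succ, Fin.zero_succAbove, Fin.tail]
      _ = (∫⁻ y, f 0 y ∂μ) * ∏ j : Fin n, ∫⁻ y, f j.succ y ∂μ := by
          have h2 := lintegral_prod_mul (μ := μ) (ν := Measure.pi fun _ : Fin n => μ)
            (f := f 0) (g := fun t : Fin n → X => ∏ j : Fin n, f j.succ (t j))
            ((hf 0).aemeasurable)
            ((Finset.measurable_prod _ fun j _ =>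
              (hf j.succ).comp (measurable_pi_apply j)).aemeasurable)
          simpa [ih _ fun j => hf j.succ] using h2
      _ = ∏ i, ∫⁻ y, f i y ∂μ := (Fin.prod_univ_succ fun i => ∫⁻ y, f i y ∂μ).symm


/-- The one–dimensional Gaussian likelihood-ratio factor. -/
noncomputable def rfac (σ c z : ℝ) : ℝ≥0∞ :=
  ENNReal.ofReal (Real.exp ((z * c - c ^ 2 / 2) / σ ^ 2))

lemma rfac_meas (σ c : ℝ) : Measurable (rfac σ c) := by
  unfold rfac
  exact (((measurable_id.mul_const c).sub measurable_const).div_const _).exp.ennreal_ofReal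

lemma toNNReal_sq_ne_zero {σ : ℝ} (hσ : 0 < σ) : Real.toNNReal (σ ^ 2) ≠ 0 := by
  simp only [ne_eq, Real.toNNReal_eq_zero, not_le]
  positivity

lemma coe_toNNReal_sq {σ : ℝ} (hσ : 0 < σ) : ((Real.toNNReal (σ ^ 2)) : ℝ) = σ ^ 2 :=
  Real.coe_toNNReal _ (sq_nonneg σ)

lemma oneDim_shift {σ : ℝ} (hσ : 0 < σ) (c : ℝ) :
    (gaussianReal 0 (Real.toNNReal (σ ^ 2))).withDensity (rfac σ c)
      = gaussianReal c (Real.toNNReal (σ ^ 2)) := by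
  set V := Real.toNNReal (σ ^ 2) with hV
  have hV0 : V ≠ 0 := toNNReal_sq_ne_zero hσ
  rw [gaussianReal_of_var_ne_zero 0 hV0, gaussianReal_of_var_ne_zero c hV0,
    ← withDensity_mul _ (measurable_gaussianPDF _ _) (rfac_meas σ c)]
  congr 1
  funext z
  simp only [Pi.mul_apply, gaussianPDF, rfac,
    ← ENNReal.ofReal_mul (gaussianPDFReal_nonneg _ _ _)]
  congr 1
  simp only [gaussianPDFReal, hV, coe_toNNReal_sq hσ]
  rw [mul_assoc, ← Real.exp_add]
  congr 1
  have : σ ^ 2 ≠ 0 := by positivity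
  field_simp
  ring

lemma oneDim_moment {σ : ℝ} (hσ : 0 < σ) (c a : ℝ) :
    ∫⁻ z, (rfac σ c z) ^ a ∂(gaussianReal 0 (Real.toNNReal (σ ^ 2)))
      = ENNReal.ofReal (Real.exp (a * (a - 1) * c ^ 2 / (2 * σ ^ 2))) := by
  set V := Real.toNNReal (σ ^ 2) with hV
  have hV0 : V ≠ 0 := toNNReal_sq_ne_zero hσ
  have hσ2 : σ ^ 2 ≠ 0 := by positivity
  have hpow : ∀ z, (rfac σ c z) ^ a
      = ENNReal.ofReal (Real.exp (a * ((z * c - c ^ 2 / 2) / σ ^ 2))) := by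
    intro z
    rw [rfac, ENNReal.ofReal_rpow_of_pos (Real.exp_pos _), ← Real.exp_mul, mul_comm]
  simp_rw [hpow]
  rw [gaussianReal_of_var_ne_zero 0 hV0,
    lintegral_withDensity_eq_lintegral_mul _ (measurable_gaussianPDF _ _)
      (show Measurable fun z : ℝ => ENNReal.ofReal (Real.exp (a * ((z * c - c ^ 2 / 2) / σ ^ 2))) by fun_prop)]
  have hpt : ∀ z, (gaussianPDF 0 V * fun z =>
        ENNReal.ofReal (Real.exp (a * ((z * c - c ^ 2 / 2) / σ ^ 2)))) z
      = ENNReal.ofReal (Real.exp (a * (a - 1) * c ^ 2 / (2 * σ ^ 2))) * gaussianPDF (a * c) V z := by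
    intro z
    simp only [Pi.mul_apply, gaussianPDF,
      ← ENNReal.ofReal_mul (gaussianPDFReal_nonneg _ _ _),
      ← ENNReal.ofReal_mul (Real.exp_pos _).le]
    congr 1
    simp only [gaussianPDFReal, hV, coe_toNNReal_sq hσ]
    have hk : ∀ k A B C D : ℝ, A + B = C + D →
        k * Real.exp A * Real.exp B = Real.exp C * (k * Real.exp D) := by
      intro k A B C D hABCD
      rw [mul_assoc, ← Real.exp_add, hABCD, Real.exp_add]
      ring
    exact hk _ _ _ _ _ (by field_simp; ring)
  simp_rw [hpt]
  rw [lintegral_const_mul _ (measurable_gaussianPDF _ _), lintegral_gaussianPDF_eq_one _ hV0,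
    mul_one]


/-- The `d`-dimensional Gaussian likelihood-ratio factor. -/
noncomputable def Rbig {d : ℕ} (σ : ℝ) (c : Fin d → ℝ) (z : Fin d → ℝ) : ℝ≥0∞ :=
  ∏ i, rfac σ (c i) (z i)

lemma Rbig_meas {d : ℕ} (σ : ℝ) (c : Fin d → ℝ) : Measurable (Rbig σ c) :=
  Finset.measurable_prod _ fun i _ => (rfac_meas σ (c i)).comp (measurable_pi_apply i)

instance gaussNoise_prob (d : ℕ) (σ : ℝ) : IsProbabilityMeasure (gaussNoise d σ) := by
  unfold gaussNoise; infer_instance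

lemma gauss_map_shift {d : ℕ} {σ : ℝ} (hσ : 0 < σ) (c : Fin d → ℝ) :
    (gaussNoise d σ).map (fun z => c + z)
      = Measure.pi (fun i => gaussianReal (c i) (Real.toNNReal (σ ^ 2))) := by
  refine (Measure.pi_eq (μ := fun i => gaussianReal (c i) (Real.toNNReal (σ ^ 2)))
    fun s hs => ?_).symm
  rw [Measure.map_apply (show Measurable fun z : Fin d → ℝ => c + z by fun_prop)
    (MeasurableSet.univ_pi hs)]
  have hpre : (fun z : Fin d → ℝ => c + z) ⁻¹' (Set.univ.pi s)
      = Set.univ.pi (fun i => (fun x => c i + x) ⁻¹' s i) := by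
    ext z
    simp [Set.mem_pi]
  rw [hpre, gaussNoise, Measure.pi_pi]
  refine Finset.prod_congr rfl fun i _ => ?_
  rw [← Measure.map_apply (show Measurable fun x : ℝ => c i + x by fun_prop) (hs i),
    gaussianReal_map_const_add (μ := 0) (c i), zero_add]

lemma gauss_withDensity {d : ℕ} {σ : ℝ} (hσ : 0 < σ) (c : Fin d → ℝ) :
    (gaussNoise d σ).withDensity (Rbig σ c)
      = Measure.pi (fun i => gaussianReal (c i) (Real.toNNReal (σ ^ 2))) := by
  refine (Measure.pi_eq (μ := fun i => gaussianReal (c i) (Real.toNNReal (σ ^ 2)))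
    fun s hs => ?_).symm
  rw [withDensity_apply _ (MeasurableSet.univ_pi hs), ← lintegral_indicator (MeasurableSet.univ_pi hs)]
  have hind : ∀ z : Fin d → ℝ, (Set.univ.pi s).indicator (Rbig σ c) z
      = ∏ i, (s i).indicator (rfac σ (c i)) (z i) := by
    intro z
    by_cases hz : z ∈ Set.univ.pi s
    · rw [Set.indicator_of_mem hz, Rbig]
      exact Finset.prod_congr rfl fun i _ =>
        (Set.indicator_of_mem (hz i (Set.mem_univ i)) _).symm
    · rw [Set.indicator_of_notMem hz]
      simp only [Set.mem_pi, Set.mem_univ, forall_true_left, not_forall] at hz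
      obtain ⟨i, hi⟩ := hz
      exact (Finset.prod_eq_zero (Finset.mem_univ i)
        (by rw [Set.indicator_of_notMem hi])).symm
  simp_rw [hind]
  rw [gaussNoise, lintegral_pi_const (gaussianReal 0 (Real.toNNReal (σ ^ 2))) d
    (fun i y => (s i).indicator (rfac σ (c i)) y)
    (fun i => (rfac_meas σ (c i)).indicator (hs i))]
  refine Finset.prod_congr rfl fun i _ => ?_
  rw [lintegral_indicator (hs i), ← withDensity_apply _ (hs i), oneDim_shift hσ]

lemma gauss_moment {d : ℕ} {σ : ℝ} (hσ : 0 < σ) (c : Fin d → ℝ) {a : ℝ} (ha : 0 ≤ a) :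
    ∫⁻ z, (Rbig σ c z) ^ a ∂(gaussNoise d σ)
      = ENNReal.ofReal (Real.exp (a * (a - 1) * (∑ i, c i ^ 2) / (2 * σ ^ 2))) := by
  have h1 : ∀ z : Fin d → ℝ, (Rbig σ c z) ^ a = ∏ i, (rfac σ (c i) (z i)) ^ a := fun z =>
    (ENNReal.prod_rpow_of_nonneg ha).symm
  simp_rw [h1]
  rw [gaussNoise, lintegral_pi_const (gaussianReal 0 (Real.toNNReal (σ ^ 2))) d
    (fun i y => rfac σ (c i) y ^ a)
    (fun i => (rfac_meas σ (c i)).pow_const a)]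
  have h2 : ∀ i : Fin d, ∫⁻ y, (rfac σ (c i) y) ^ a ∂(gaussianReal 0 (Real.toNNReal (σ ^ 2)))
      = ENNReal.ofReal (Real.exp (a * (a - 1) * (c i) ^ 2 / (2 * σ ^ 2))) :=
    fun i => oneDim_moment hσ (c i) a
  simp_rw [h2]
  rw [← ENNReal.ofReal_prod_of_nonneg (fun i _ => (Real.exp_pos _).le), ← Real.exp_sum]
  congr 2
  rw [← Finset.sum_div, ← Finset.mul_sum]

lemma onestep {d : ℕ} {σ α α' : ℝ} (hσ : 0 < σ) (hconj : α.HolderConjugate α')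
    {g : (Fin d → ℝ) → ℝ≥0∞} (hg : Measurable g) (u v : Fin d → ℝ) :
    ∫⁻ z, g (u + z) ∂(gaussNoise d σ) ≤
      (∫⁻ z, g (v + z) ^ α' ∂(gaussNoise d σ)) ^ (1 / α')
        * ENNReal.ofReal (Real.exp ((α - 1) * (∑ i, (u i - v i) ^ 2) / (2 * σ ^ 2))) := by
  set c := u - v with hc
  have hvm : Measurable fun z : Fin d → ℝ => g (v + z) :=
    hg.comp (show Measurable fun z : Fin d → ℝ => v + z by fun_prop)
  have h1 : ∀ z : Fin d → ℝ, u + z = v + (c + z) := by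
    intro z
    rw [hc]
    abel
  have hci : ∀ i, c i = u i - v i := fun i => rfl
  calc ∫⁻ z, g (u + z) ∂(gaussNoise d σ)
      = ∫⁻ z, g (v + (c + z)) ∂(gaussNoise d σ) := by simp_rw [h1]
    _ = ∫⁻ w, g (v + w) ∂((gaussNoise d σ).map (fun z => c + z)) :=
        (lintegral_map hvm (show Measurable fun z : Fin d → ℝ => c + z by fun_prop)).symm
    _ = ∫⁻ w, (Rbig σ c * fun w => g (v + w)) w ∂(gaussNoise d σ) := by
        rw [gauss_map_shift hσ c, ← gauss_withDensity hσ c,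
          lintegral_withDensity_eq_lintegral_mul _ (Rbig_meas σ c) hvm]
    _ ≤ (∫⁻ w, Rbig σ c w ^ α ∂(gaussNoise d σ)) ^ (1 / α)
          * (∫⁻ w, g (v + w) ^ α' ∂(gaussNoise d σ)) ^ (1 / α') :=
        ENNReal.lintegral_mul_le_Lp_mul_Lq _ hconj (Rbig_meas σ c).aemeasurable hvm.aemeasurable
    _ = (∫⁻ z, g (v + z) ^ α' ∂(gaussNoise d σ)) ^ (1 / α')
          * ENNReal.ofReal (Real.exp ((α - 1) * (∑ i, (u i - v i) ^ 2) / (2 * σ ^ 2))) := by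
        rw [gauss_moment hσ c hconj.nonneg,
          ENNReal.ofReal_rpow_of_pos (Real.exp_pos _), ← Real.exp_mul]
        have hα0 : α ≠ 0 := hconj.ne_zero
        have hsum : (∑ i, c i ^ 2) = ∑ i, (u i - v i) ^ 2 := rfl
        have hE : α * (α - 1) * (∑ i, c i ^ 2) / (2 * σ ^ 2) * (1 / α)
            = (α - 1) * (∑ i, (u i - v i) ^ 2) / (2 * σ ^ 2) := by
          rw [hsum]
          field_simp
        rw [hE, mul_comm]

end Theorem2Aux


/-- Theorem 2 (full participation, `q = m`): the multi-task mechanism that outputs, for each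
task `k`, the personalized model obtained by locally finetuning from the global model drawn
from the composed full-participation mechanism is `(ε,δ)`-jointly differentially private. -/
theorem theorem2_full_participation
    {d m T : ℕ} (hd : 0 < d) (hm : 0 < m) (hT : 0 < T)
    {γ : ℝ} (hγ : 0 < γ) {δ : ℝ} (hδ0 : 0 < δ) (hδ1 : δ < 1)
    {ε : ℝ} (hε0 : 0 < ε) (hε : ε ≤ 2 * Real.log (1 / δ))
    {σ : ℝ} (hσ : σ = 4 * γ * Real.sqrt (T * Real.log (1 / δ)) / (ε * m))
    {𝒟 : Fin m → Type*} [∀ k, MeasurableSpace (𝒟 k)]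
    {𝒲' : Fin m → Type*} [∀ k, MeasurableSpace (𝒲' k)]
    (h : ℕ → ∀ k : Fin m, 𝒟 k × (Fin d → ℝ) → (Fin d → ℝ))
    (hmeas : ∀ (t : ℕ) (k : Fin m), Measurable (h t k))
    (hsens : ∀ t < T, ∀ (k : Fin m) (w : Fin d → ℝ) (x x' : 𝒟 k),
      euclNorm (h t k (x, w) - h t k (x', w)) ≤ γ)
    (h' : ∀ k : Fin m, 𝒟 k × (Fin d → ℝ) → 𝒲' k)
    (h'meas : ∀ (k : Fin m) (x : 𝒟 k), Measurable fun w : Fin d → ℝ => h' k (x, w))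
    (w0 : Fin d → ℝ)
    (μ : ℕ → (∀ k : Fin m, 𝒟 k) → Measure (Fin d → ℝ))
    (hμ0 : ∀ D, μ 0 D = Measure.dirac w0)
    (hμsucc : ∀ (t : ℕ) (D : ∀ k : Fin m, 𝒟 k),
      μ (t + 1) D = (μ t D).bind fun w =>
        Measure.map (fun z => w + (m : ℝ)⁻¹ • (∑ k : Fin m, h t k (D k, w)) + z)
          (gaussNoise d σ)) :
    ∀ (j : Fin m) (D D' : ∀ k : Fin m, 𝒟 k),
      (∀ k : Fin m, k ≠ j → D k = D' k) →
      ∀ S : Set (∀ k : {k : Fin m // k ≠ j}, 𝒲' k), MeasurableSet S →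
        Measure.map (fun w => fun k : {k : Fin m // k ≠ j} => h' k (D k, w)) (μ T D) S
          ≤ ENNReal.ofReal (Real.exp ε)
              * Measure.map (fun w => fun k : {k : Fin m // k ≠ j} => h' k (D' k, w))
                  (μ T D') S
            + ENNReal.ofReal δ := by
  intro j D D' hDD' S hS
  have hm0 : (0:ℝ) < m := by exact_mod_cast hm
  have hT0 : (0:ℝ) < T := by exact_mod_cast hT
  have hL : 0 < Real.log (1 / δ) := Real.log_pos (by rw [lt_div_iff₀ hδ0]; linarith)
  set L := Real.log (1 / δ) with hLdef
  have hsqTL : Real.sqrt ((T:ℝ) * L) ^ 2 = (T:ℝ) * L := Real.sq_sqrt (by positivity)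
  have hσpos : 0 < σ := by
    rw [hσ]
    have h1 : 0 < Real.sqrt ((T:ℝ) * L) := Real.sqrt_pos.mpr (by positivity)
    positivity
  have hσ2 : σ ^ 2 = 16 * γ ^ 2 * ((T:ℝ) * L) / (ε ^ 2 * (m:ℝ) ^ 2) := by
    rw [hσ, div_pow, mul_pow, mul_pow, hsqTL, mul_pow]
    norm_num
  set α : ℝ := 16 * L / ε with hαdef
  have hα1 : 1 < α := by
    rw [hαdef, lt_div_iff₀ hε0]
    nlinarith
  have hαconj : α.HolderConjugate (Real.conjExponent α) :=
    Real.HolderConjugate.conjExponent hα1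
  set α' : ℝ := Real.conjExponent α with hα'def
  have hα'pos : 0 < α' := hαconj.symm.pos
  have hα'0 : α' ≠ 0 := hαconj.symm.ne_zero
  set B : ℝ≥0∞ := ENNReal.ofReal (Real.exp ((α - 1) * (γ / m) ^ 2 / (2 * σ ^ 2))) with hBdef
  -- measurability of the drift maps and kernels
  have hFmeas : ∀ (t : ℕ) (E : ∀ k, 𝒟 k),
      Measurable (fun w : Fin d → ℝ => w + (m:ℝ)⁻¹ • (∑ k : Fin m, h t k (E k, w))) := by
    intro t E
    have hs0 : Measurable (fun w : Fin d → ℝ => ∑ k : Fin m, h t k (E k, w)) := by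
      apply Finset.measurable_sum
      intro k _
      exact (hmeas t k).comp (measurable_const.prodMk measurable_id)
    exact measurable_id.add (hs0.const_smul ((m:ℝ)⁻¹))
  have hκmeas : ∀ (t : ℕ) (E : ∀ k, 𝒟 k),
      Measurable (fun w : Fin d → ℝ =>
        Measure.map (fun z => w + (m:ℝ)⁻¹ • (∑ k : Fin m, h t k (E k, w)) + z)
          (gaussNoise d σ)) := by
    intro t E
    refine Measure.measurable_of_measurable_coe _ fun s hs => ?_
    have heval : ∀ w : Fin d → ℝ,
        (Measure.map (fun z => w + (m:ℝ)⁻¹ • (∑ k : Fin m, h t k (E k, w)) + z)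
          (gaussNoise d σ)) s
          = ∫⁻ z, s.indicator (fun _ => (1:ℝ≥0∞))
              (w + (m:ℝ)⁻¹ • (∑ k : Fin m, h t k (E k, w)) + z) ∂(gaussNoise d σ) := by
      intro w
      have hb : Measurable fun z : Fin d → ℝ =>
          w + (m:ℝ)⁻¹ • (∑ k : Fin m, h t k (E k, w)) + z :=
        measurable_const.add measurable_id
      rw [Measure.map_apply hb hs, ← lintegral_indicator_one (hb hs)]
      refine lintegral_congr fun z => ?_
      by_cases hz : w + (m:ℝ)⁻¹ • (∑ k : Fin m, h t k (E k, w)) + z ∈ s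
      · rw [Set.indicator_of_mem hz, Set.indicator_of_mem (Set.mem_preimage.mpr hz),
          Pi.one_apply]
      · rw [Set.indicator_of_notMem hz,
          Set.indicator_of_notMem (fun hc => hz (Set.mem_preimage.mp hc))]
    simp_rw [heval]
    exact Measurable.lintegral_prod_right'
      ((measurable_one.indicator hs).comp
        (((hFmeas t E).comp measurable_fst).add measurable_snd))
  -- all the iterates are probability measures
  have hprob : ∀ (t : ℕ) (E : ∀ k, 𝒟 k), IsProbabilityMeasure (μ t E) := by
    intro t
    induction t with
    | zero =>
      intro E
      rw [hμ0]
      infer_instance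
    | succ t ih =>
      intro E
      constructor
      rw [hμsucc t E, Measure.bind_apply MeasurableSet.univ (hκmeas t E).aemeasurable]
      have h1 : ∀ w : Fin d → ℝ,
          (Measure.map (fun z => w + (m:ℝ)⁻¹ • (∑ k : Fin m, h t k (E k, w)) + z)
            (gaussNoise d σ)) Set.univ = 1 := by
        intro w
        haveI := Measure.isProbabilityMeasure_map (μ := gaussNoise d σ)
          (f := fun z => w + (m:ℝ)⁻¹ • (∑ k : Fin m, h t k (E k, w)) + z)
          (measurable_const.add measurable_id).aemeasurable
        exact measure_univ
      simp_rw [h1]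
      haveI := ih E
      rw [lintegral_one, measure_univ]
  -- the key moment inequality, by induction on the number of rounds
  have key : ∀ t, t ≤ T → ∀ g : (Fin d → ℝ) → ℝ≥0∞, Measurable g →
      ∫⁻ w, g w ∂(μ t D) ≤ (∫⁻ w, g w ^ α' ∂(μ t D')) ^ (1 / α') * B ^ t := by
    intro t
    induction t with
    | zero =>
      intro _ g hg
      rw [hμ0 D, hμ0 D', lintegral_dirac' _ hg, lintegral_dirac' _ (hg.pow_const α'),
        pow_zero, mul_one, ← ENNReal.rpow_mul, mul_one_div, div_self hα'0, ENNReal.rpow_one]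
    | succ t ih =>
      intro ht1 g hg
      have htT : t < T := Nat.lt_of_succ_le ht1
      rw [hμsucc t D, hμsucc t D',
        Measure.lintegral_bind (hκmeas t D).aemeasurable hg.aemeasurable,
        Measure.lintegral_bind (hκmeas t D').aemeasurable (hg.pow_const α').aemeasurable]
      have hinner : ∀ (E : ∀ k, 𝒟 k) (g' : (Fin d → ℝ) → ℝ≥0∞), Measurable g' →
          ∀ w : Fin d → ℝ,
          ∫⁻ x, g' x ∂(Measure.map
              (fun z => w + (m:ℝ)⁻¹ • (∑ k : Fin m, h t k (E k, w)) + z) (gaussNoise d σ))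
            = ∫⁻ z, g' (w + (m:ℝ)⁻¹ • (∑ k : Fin m, h t k (E k, w)) + z) ∂(gaussNoise d σ) :=
        fun E g' hg' w => lintegral_map hg'
          (show Measurable fun z : Fin d → ℝ =>
              w + (m:ℝ)⁻¹ • (∑ k : Fin m, h t k (E k, w)) + z
            from measurable_const.add measurable_id)
      simp_rw [hinner D g hg, hinner D' _ (hg.pow_const α')]
      set H : (Fin d → ℝ) → ℝ≥0∞ := fun w =>
        ∫⁻ z, g (w + (m:ℝ)⁻¹ • (∑ k : Fin m, h t k (D k, w)) + z) ∂(gaussNoise d σ) with hH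
      set H' : (Fin d → ℝ) → ℝ≥0∞ := fun w =>
        ∫⁻ z, g (w + (m:ℝ)⁻¹ • (∑ k : Fin m, h t k (D' k, w)) + z) ^ α' ∂(gaussNoise d σ)
        with hH'
      have hHmeas : Measurable H :=
        Measurable.lintegral_prod_right'
          (hg.comp (((hFmeas t D).comp measurable_fst).add measurable_snd))
      have hH'meas : Measurable H' :=
        Measurable.lintegral_prod_right'
          ((hg.pow_const α').comp (((hFmeas t D').comp measurable_fst).add measurable_snd))
      -- the single-round bound
      have hstep : ∀ w, H w ≤ (H' w) ^ (1 / α') * B := by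
        intro w
        have hub := Theorem2Aux.onestep (d := d) hσpos hαconj hg
          (w + (m:ℝ)⁻¹ • (∑ k : Fin m, h t k (D k, w)))
          (w + (m:ℝ)⁻¹ • (∑ k : Fin m, h t k (D' k, w)))
        refine le_trans hub (mul_le_mul_right
          (ENNReal.ofReal_le_ofReal (Real.exp_le_exp.mpr ?_)) _)
        have hdiff : ∀ i : Fin d,
            (w + (m:ℝ)⁻¹ • (∑ k : Fin m, h t k (D k, w))) i
              - (w + (m:ℝ)⁻¹ • (∑ k : Fin m, h t k (D' k, w))) i
            = (m:ℝ)⁻¹ * (h t j (D j, w) i - h t j (D' j, w) i) := by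
          intro i
          have hsum : (∑ k : Fin m, h t k (D k, w)) - (∑ k : Fin m, h t k (D' k, w))
              = h t j (D j, w) - h t j (D' j, w) := by
            rw [← Finset.sum_sub_distrib]
            exact Finset.sum_eq_single j (fun k _ hk => by rw [hDD' k hk, sub_self])
              (fun hj => absurd (Finset.mem_univ j) hj)
          have hsum' : (∑ k : Fin m, h t k (D k, w)) i - (∑ k : Fin m, h t k (D' k, w)) i
              = h t j (D j, w) i - h t j (D' j, w) i := by
            have := congrFun hsum i
            simpa using this
          simp only [Pi.add_apply, Pi.smul_apply, smul_eq_mul]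
          rw [show ∀ a b c : ℝ, (a + b) - (a + c) = b - c from fun a b c => by ring,
            ← mul_sub, hsum']
        have hd2 : ∑ i, ((w + (m:ℝ)⁻¹ • (∑ k : Fin m, h t k (D k, w))) i
              - (w + (m:ℝ)⁻¹ • (∑ k : Fin m, h t k (D' k, w))) i) ^ 2 ≤ (γ / m) ^ 2 := by
          calc ∑ i, ((w + (m:ℝ)⁻¹ • (∑ k : Fin m, h t k (D k, w))) i
                - (w + (m:ℝ)⁻¹ • (∑ k : Fin m, h t k (D' k, w))) i) ^ 2
              = ((m:ℝ)⁻¹) ^ 2 * ∑ i, (h t j (D j, w) i - h t j (D' j, w) i) ^ 2 := by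
                rw [Finset.mul_sum]
                exact Finset.sum_congr rfl fun i _ => by rw [hdiff i]; ring
            _ ≤ ((m:ℝ)⁻¹) ^ 2 * γ ^ 2 := by
                refine mul_le_mul_of_nonneg_left ?_ (by positivity)
                have hγw := hsens t htT j w (D j) (D' j)
                have h0 : (0:ℝ) ≤ ∑ i, (h t j (D j, w) i - h t j (D' j, w) i) ^ 2 := by
                  positivity
                have heq : euclNorm (h t j (D j, w) - h t j (D' j, w))
                    = Real.sqrt (∑ i, (h t j (D j, w) i - h t j (D' j, w) i) ^ 2) := by
                  simp [euclNorm]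
                rw [heq] at hγw
                calc ∑ i, (h t j (D j, w) i - h t j (D' j, w) i) ^ 2
                    = Real.sqrt (∑ i, (h t j (D j, w) i - h t j (D' j, w) i) ^ 2) ^ 2 :=
                      (Real.sq_sqrt h0).symm
                  _ ≤ γ ^ 2 := pow_le_pow_left₀ (Real.sqrt_nonneg _) hγw 2
            _ = (γ / m) ^ 2 := by field_simp
        have hα10 : (0:ℝ) ≤ α - 1 := le_of_lt (sub_pos.mpr hα1)
        gcongr
      -- combine with the induction hypothesis
      calc ∫⁻ w, H w ∂(μ t D)
          ≤ (∫⁻ w, H w ^ α' ∂(μ t D')) ^ (1 / α') * B ^ t :=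
            ih (le_of_lt htT) H hHmeas
        _ ≤ ((∫⁻ w, H' w ∂(μ t D')) * B ^ α') ^ (1 / α') * B ^ t := by
            refine mul_le_mul_left (ENNReal.rpow_le_rpow ?_ (by positivity)) _
            calc ∫⁻ w, H w ^ α' ∂(μ t D')
                ≤ ∫⁻ w, H' w * B ^ α' ∂(μ t D') := by
                  refine lintegral_mono fun w => ?_
                  have h2 := ENNReal.rpow_le_rpow (hstep w) (le_of_lt hα'pos)
                  rwa [ENNReal.mul_rpow_of_nonneg _ _ (le_of_lt hα'pos),
                    ← ENNReal.rpow_mul, one_div_mul_cancel hα'0, ENNReal.rpow_one] at h2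
              _ = (∫⁻ w, H' w ∂(μ t D')) * B ^ α' := lintegral_mul_const _ hH'meas
        _ = (∫⁻ w, H' w ∂(μ t D')) ^ (1 / α') * B ^ (t + 1) := by
            rw [ENNReal.mul_rpow_of_nonneg _ _ (by positivity : (0:ℝ) ≤ 1 / α'),
              ← ENNReal.rpow_mul, mul_one_div, div_self hα'0, ENNReal.rpow_one,
              pow_succ]
            ring
  -- reduce joint DP to a statement about the global model
  have hf'meas : Measurable fun w : Fin d → ℝ =>
      fun k : {k : Fin m // k ≠ j} => h' k (D' k, w) :=
    measurable_pi_lambda _ fun k => h'meas k (D' k)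
  have hfun : (fun w : Fin d → ℝ => fun k : {k : Fin m // k ≠ j} => h' k (D k, w))
      = fun w : Fin d → ℝ => fun k : {k : Fin m // k ≠ j} => h' k (D' k, w) := by
    funext w k
    rw [hDD' k k.2]
  rw [hfun, Measure.map_apply hf'meas hS, Measure.map_apply hf'meas hS]
  set A := (fun w : Fin d → ℝ => fun k : {k : Fin m // k ≠ j} => h' k (D' k, w)) ⁻¹' S
    with hA
  have hAmeas : MeasurableSet A := hf'meas hS
  have hkey := key T le_rfl (A.indicator (1 : (Fin d → ℝ) → ℝ≥0∞))
    (measurable_one.indicator hAmeas)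
  rw [lintegral_indicator_one hAmeas] at hkey
  have hind : ∀ w, (A.indicator (1 : (Fin d → ℝ) → ℝ≥0∞) w) ^ α'
      = A.indicator (1 : (Fin d → ℝ) → ℝ≥0∞) w := by
    intro w
    by_cases hw : w ∈ A
    · simp [Set.indicator_of_mem hw]
    · simp [Set.indicator_of_notMem hw, ENNReal.zero_rpow_of_pos hα'pos]
  simp_rw [hind, lintegral_indicator_one hAmeas] at hkey
  -- the closing numeric computation
  haveI := hprob T D'
  have hq_ne_top : μ T D' A ≠ ∞ := measure_ne_top _ _
  set q : ℝ := (μ T D' A).toReal with hq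
  have hq0 : (0:ℝ) ≤ q := ENNReal.toReal_nonneg
  have hqeq : μ T D' A = ENNReal.ofReal q := (ENNReal.ofReal_toReal hq_ne_top).symm
  set b : ℝ := (α - 1) * (γ / m) ^ 2 / (2 * σ ^ 2) with hb
  have hBT : B ^ T = ENNReal.ofReal (Real.exp ((T:ℝ) * b)) := by
    rw [hBdef, ← ENNReal.ofReal_pow (Real.exp_pos _).le, ← Real.exp_nat_mul]
  have hθ : 1 / α' = 1 - 1 / α := by
    have h1 := hαconj.inv_add_inv_eq_one
    rw [one_div, one_div]
    linarith
  have hαpos : 0 < α := hαconj.pos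
  have hθ0 : (0:ℝ) ≤ 1 / α' := by positivity
  have hθα : 1 / α' + 1 / α = 1 := by rw [hθ]; ring
  have hθ1 : 1 / α' ≤ 1 := by
    rw [hθ]
    have : 0 ≤ 1 / α := by positivity
    linarith
  have h1α1 : 1 / α ≤ 1 := by
    rw [div_le_one hαpos]
    linarith
  set c0 : ℝ := Real.exp (α * ((T:ℝ) * b) - (α - 1) * ε) with hc0
  have hc00 : (0:ℝ) ≤ c0 := (Real.exp_pos _).le
  -- algebraic identities for the parameters
  have hαε : α * ε = 16 * L := by
    rw [hαdef]
    field_simp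
  have hTb : (T:ℝ) * b = (α - 1) * ε ^ 2 / (32 * L) := by
    rw [hb, hσ2]
    have hγ0 : γ ≠ 0 := ne_of_gt hγ
    have hm0' : (m:ℝ) ≠ 0 := ne_of_gt hm0
    have hT0' : (T:ℝ) ≠ 0 := ne_of_gt hT0
    have hL0 : L ≠ 0 := ne_of_gt hL
    have hε0' : ε ≠ 0 := ne_of_gt hε0
    field_simp
    ring
  have hexp_le : α * ((T:ℝ) * b) - (α - 1) * ε ≤ Real.log δ := by
    have hlogδ : Real.log δ = -L := by
      rw [hLdef, one_div, Real.log_inv]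
      ring
    have hL0 : L ≠ 0 := ne_of_gt hL
    have hε0' : ε ≠ 0 := ne_of_gt hε0
    have h2 : α * ((T:ℝ) * b) = (α - 1) * ε / 2 := by
      rw [hTb, hαdef]
      field_simp
      ring
    have h3 : 2 * L ≤ (α - 1) * ε := by
      have h4 : (α - 1) * ε = 16 * L - ε := by
        rw [hαdef]
        field_simp
      rw [h4]
      linarith
    rw [hlogδ, h2]
    linarith
  have hc0δ : c0 ≤ δ := by
    rw [hc0]
    calc Real.exp (α * ((T:ℝ) * b) - (α - 1) * ε) ≤ Real.exp (Real.log δ) :=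
          Real.exp_le_exp.mpr hexp_le
      _ = δ := Real.exp_log hδ0
  have hid : Real.exp ((T:ℝ) * b) * q ^ (1 / α')
      = (Real.exp ε * q) ^ (1 / α') * c0 ^ (1 / α) := by
    have hexp : ε * (1 / α') + (α * ((T:ℝ) * b) - (α - 1) * ε) * (1 / α) = (T:ℝ) * b := by
      rw [hθ]
      have hα0' : α ≠ 0 := ne_of_gt hαpos
      field_simp
      ring
    calc Real.exp ((T:ℝ) * b) * q ^ (1 / α')
        = Real.exp (ε * (1 / α'))
            * Real.exp ((α * ((T:ℝ) * b) - (α - 1) * ε) * (1 / α)) * q ^ (1 / α') := by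
          rw [← Real.exp_add, hexp]
      _ = Real.exp ε ^ (1 / α') * q ^ (1 / α') * c0 ^ (1 / α) := by
          rw [Real.exp_mul, Real.exp_mul, hc0]
          ring
      _ = (Real.exp ε * q) ^ (1 / α') * c0 ^ (1 / α) := by
          rw [Real.mul_rpow (Real.exp_pos _).le hq0]
  have hyoung : Real.exp ((T:ℝ) * b) * q ^ (1 / α') ≤ Real.exp ε * q + δ := by
    rw [hid]
    have h2 := Real.geom_mean_le_arith_mean2_weighted hθ0 (by positivity : (0:ℝ) ≤ 1 / α)
      (by positivity : (0:ℝ) ≤ Real.exp ε * q) hc00 hθα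
    have h3 : (1 / α') * (Real.exp ε * q) ≤ Real.exp ε * q :=
      mul_le_of_le_one_left (by positivity) hθ1
    have h4 : (1 / α) * c0 ≤ δ :=
      le_trans (mul_le_of_le_one_left hc00 h1α1) hc0δ
    linarith
  -- put everything together
  calc μ T D A ≤ (μ T D' A) ^ (1 / α') * B ^ T := hkey
    _ = ENNReal.ofReal (q ^ (1 / α') * Real.exp ((T:ℝ) * b)) := by
        rw [hqeq, hBT, ENNReal.ofReal_rpow_of_nonneg hq0 hθ0,
          ← ENNReal.ofReal_mul (Real.rpow_nonneg hq0 _)]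
    _ ≤ ENNReal.ofReal (Real.exp ε * q + δ) := by
        refine ENNReal.ofReal_le_ofReal ?_
        rw [mul_comm]
        exact hyoung
    _ ≤ ENNReal.ofReal (Real.exp ε) * μ T D' A + ENNReal.ofReal δ := by
        rw [ENNReal.ofReal_add (by positivity) hδ0.le,
          ENNReal.ofReal_mul (Real.exp_pos _).le, hqeq]
end

section
/- Blockwise geometric contraction with periodic perturbation (core of the proof of Theorem 4): Let E be a positive integer, let ρ be a real with 0 < ρ < 1, let c ≥ 0, and let a : ℕ → ℝ be a sequence such that for every t ∈ ℕ: if E divides t + 1 then a(t+1) ≤ ρ·a(t) + c, and otherwise a(t+1) ≤ ρ·a(t). Then for every natural number K, a(K·E) − c/(1 − ρ^E) ≤ ρ^(K·E) · (a(0) − c/(1 − ρ^E)); in particular, a(K·E) ≤ ρ^(K·E)·(a(0) − c/(1 − ρ^E)) + c/(1 − ρ^E). -/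
/-- Blockwise geometric contraction with periodic perturbation
(core of the proof of Theorem 4). -/
theorem blockwise_geometric_contraction
    (E : ℕ) (hE : 0 < E) (ρ : ℝ) (hρ0 : 0 < ρ) (hρ1 : ρ < 1)
    (c : ℝ) (hc : 0 ≤ c) (a : ℕ → ℝ)
    (hrec₁ : ∀ t : ℕ, E ∣ (t + 1) → a (t + 1) ≤ ρ * a t + c)
    (hrec₂ : ∀ t : ℕ, ¬ E ∣ (t + 1) → a (t + 1) ≤ ρ * a t) :
    ∀ K : ℕ,
      a (K * E) - c / (1 - ρ ^ E) ≤ ρ ^ (K * E) * (a 0 - c / (1 - ρ ^ E)) ∧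
      a (K * E) ≤ ρ ^ (K * E) * (a 0 - c / (1 - ρ ^ E)) + c / (1 - ρ ^ E) := by
  have hρE : ρ ^ E < 1 := pow_lt_one₀ hρ0.le hρ1 hE.ne'
  have hden : (0:ℝ) < 1 - ρ ^ E := by linarith
  set C : ℝ := c / (1 - ρ ^ E) with hC
  have hCeq : c = C * (1 - ρ ^ E) := by rw [hC, div_mul_cancel₀ c hden.ne']
  -- within a block, no perturbation
  have hinner : ∀ k j : ℕ, j < E → a (E * k + j) ≤ ρ ^ j * a (E * k) := by
    intro k j
    induction j with
    | zero => intro _; simp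
    | succ j ih =>
      intro hj
      have hjE := ih (Nat.lt_of_succ_lt hj)
      have hnd : ¬ E ∣ (E * k + j + 1) := by
        intro hdvd
        have h1 : E ∣ E * k := Dvd.intro k rfl
        have h2 : E ∣ (j + 1) := (Nat.dvd_add_right h1).mp (by
          simpa [Nat.add_assoc] using hdvd)
        have := Nat.le_of_dvd (Nat.succ_pos j) h2
        omega
      have := hrec₂ (E * k + j) hnd
      calc a (E * k + (j + 1)) = a (E * k + j + 1) := by ring_nf
        _ ≤ ρ * a (E * k + j) := this
        _ ≤ ρ * (ρ ^ j * a (E * k)) := by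
            exact mul_le_mul_of_nonneg_left hjE hρ0.le
        _ = ρ ^ (j + 1) * a (E * k) := by ring
  have hblock : ∀ k : ℕ, a (E * (k + 1)) ≤ ρ ^ E * a (E * k) + c := by
    intro k
    obtain ⟨m, hm⟩ : ∃ m, E = m + 1 := ⟨E - 1, by omega⟩
    have h1 : a (E * k + m) ≤ ρ ^ m * a (E * k) := hinner k m (by omega)
    have hdvd : E ∣ (E * k + m + 1) := by
      rw [hm]; exact ⟨k + 1, by ring⟩
    have h2 := hrec₁ (E * k + m) hdvd
    have h3 : E * (k + 1) = E * k + m + 1 := by rw [hm]; ring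
    rw [h3]
    calc a (E * k + m + 1) ≤ ρ * a (E * k + m) + c := h2
      _ ≤ ρ * (ρ ^ m * a (E * k)) + c := by
          have := mul_le_mul_of_nonneg_left h1 hρ0.le
          linarith
      _ = ρ ^ E * a (E * k) + c := by rw [hm]; ring
  have main : ∀ K : ℕ, a (K * E) - C ≤ ρ ^ (K * E) * (a 0 - C) := by
    intro K
    induction K with
    | zero => simp
    | succ K ih =>
      have hb := hblock K
      have hEk : E * (K + 1) = (K + 1) * E := by ring
      have hEk' : E * K = K * E := by ring
      rw [hEk, hEk'] at hb
      have hstep : a ((K + 1) * E) - C ≤ ρ ^ E * (a (K * E) - C) := by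
        have : ρ ^ E * C + c = C := by rw [hCeq]; ring
        nlinarith
      calc a ((K + 1) * E) - C ≤ ρ ^ E * (a (K * E) - C) := hstep
        _ ≤ ρ ^ E * (ρ ^ (K * E) * (a 0 - C)) := by
            exact mul_le_mul_of_nonneg_left ih (pow_nonneg hρ0.le E)
        _ = ρ ^ ((K + 1) * E) * (a 0 - C) := by
            rw [← mul_assoc, ← pow_add]
            have : E + K * E = (K + 1) * E := by ring
            rw [this]
  intro K
  exact ⟨main K, by linarith [main K]⟩
end
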